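/- arXiv:1609.05863 — 2 statements merged into one kernel-verified Lean document; each statement's English description precedes it below -/
import Mathlib

section
/- For all integers n ≥ 1, ∫₀¹ x^{n-1} (ln(1-x))² dx = (H_n² + ζ_n(2))/n, where H_n is the n-th harmonic number and ζ_n(2) = ∑_{j=1}^n 1/j². -/
/-!
Integrating `x ^ n * log (1 - x) ^ (p + 1)` by parts against the antiderivative
`(x ^ (n + 1) - 1) / (n + 1)` of `x ^ n`, which vanishes at `1` and so kills the boundary term,
lowers the power of the logarithm by one, since `(x ^ (n + 1) - 1) / (1 - x) = -∑_{k ≤ n} x ^ k`.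
Two such steps give `∫₀¹ x ^ n log² (1 - x) dx = 2 / (n + 1) * ∑_{k ≤ n} H_{k+1} / (k + 1)`, and
`2 ∑_{k} a_k ∑_{i ≤ k} a_i = (∑ a_k)² + ∑ a_k²` with `a_k = 1 / (k + 1)`.
-/

open Real Set Filter Finset MeasureTheory intervalIntegral Topology

lemma abs_log_pow_le_rpow (p : ℕ) {t : ℝ} (ht₀ : 0 < t) (ht₁ : t ≤ 1) :
    |log t| ^ p ≤ (p + 1) ^ p * t ^ (-(p / (p + 1)) : ℝ) := by
  have hlog : |log t| ≤ (p + 1) * t ^ (-(1 / (p + 1)) : ℝ) := by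
    have := abs_log_mul_self_rpow_lt t (1 / (p + 1)) ht₀ ht₁ (by positivity)
    rw [abs_mul, abs_of_pos (rpow_pos_of_pos ht₀ _), one_div_one_div] at this
    rw [rpow_neg ht₀.le, ← div_eq_mul_inv, le_div_iff₀ (rpow_pos_of_pos ht₀ _)]
    exact this.le
  calc |log t| ^ p ≤ ((p + 1) * t ^ (-(1 / (p + 1)) : ℝ)) ^ p := by gcongr
    _ = (p + 1) ^ p * t ^ (-(p / (p + 1)) : ℝ) := by
      rw [mul_pow, ← rpow_natCast (t ^ _), ← rpow_mul ht₀.le]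
      congr 2
      ring

lemma intervalIntegrable_log_pow (p : ℕ) :
    IntervalIntegrable (fun t => log t ^ p) volume 0 1 := by
  have hexp : -1 < -((p : ℝ) / (p + 1)) := by
    rw [neg_lt_neg_iff, div_lt_one (by positivity)]
    linarith
  refine ((intervalIntegrable_rpow' hexp).const_mul ((p + 1) ^ p)).mono_fun
    (measurable_log.pow_const p).aestronglyMeasurable ?_
  rw [EventuallyLE, ae_restrict_iff' measurableSet_uIoc]
  refine .of_forall fun t ht => ?_
  rw [uIoc_of_le zero_le_one] at ht
  rw [norm_pow, Real.norm_eq_abs, Real.norm_of_nonneg (by have := ht.1; positivity)]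
  exact abs_log_pow_le_rpow p ht.1 ht.2

lemma intervalIntegrable_pow_mul_log_one_sub_pow (k p : ℕ) :
    IntervalIntegrable (fun x => x ^ k * log (1 - x) ^ p) volume 0 1 := by
  have h := (intervalIntegrable_log_pow p).comp_sub_left 1
  rw [sub_zero, sub_self] at h
  exact h.symm.continuousOn_mul (continuous_pow k).continuousOn

lemma tendsto_mul_log_pow_nhdsGT_zero (p : ℕ) :
    Tendsto (fun t => t * log t ^ p) (𝓝[>] 0) (𝓝 0) := by
  have h := (isLittleO_abs_log_rpow_rpow_nhdsGT_zero (p : ℝ) neg_one_lt_zero).tendsto_div_nhds_zero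
  rw [tendsto_zero_iff_norm_tendsto_zero]
  refine h.congr' (eventually_mem_nhdsWithin.mono fun t (ht : 0 < t) => ?_)
  dsimp only
  rw [rpow_natCast, rpow_neg_one, div_inv_eq_mul, norm_mul, norm_pow, Real.norm_eq_abs,
    Real.norm_eq_abs, abs_of_pos ht, mul_comm]

lemma tendsto_one_sub_mul_log_one_sub_pow (p : ℕ) :
    Tendsto (fun x => (1 - x) * log (1 - x) ^ p) (𝓝[<] 1) (𝓝 0) := by
  have h : Tendsto (fun x : ℝ => 1 - x) (𝓝[<] 1) (𝓝[>] 0) := by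
    simpa using ((continuous_sub_left (1:ℝ)).continuousWithinAt (s := Iio 1)
      (x := 1)).tendsto_nhdsWithin (t := Ioi 0) fun x hx => sub_pos.2 hx
  exact (tendsto_mul_log_pow_nhdsGT_zero p).comp h

lemma hasDerivAt_pow_sub_one_div_mul_log_one_sub_pow (n p : ℕ) {x : ℝ} (hx : x ≠ 1) :
    HasDerivAt (fun x => (x ^ (n + 1) - 1) / (n + 1) * log (1 - x) ^ (p + 1))
      (x ^ n * log (1 - x) ^ (p + 1)
        + (p + 1) / (n + 1) * ∑ k ∈ range (n + 1), x ^ k * log (1 - x) ^ p) x := by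
  have hx₁ : 1 - x ≠ 0 := sub_ne_zero.2 hx.symm
  have hpow : HasDerivAt (fun x : ℝ => (x ^ (n + 1) - 1) / (n + 1)) (x ^ n) x := by
    refine (((hasDerivAt_pow (n + 1) x).sub_const 1).div_const ((n : ℝ) + 1)).congr_deriv ?_
    push_cast
    field_simp
  have hlog : HasDerivAt (fun x => log (1 - x) ^ (p + 1))
      ((p + 1) * log (1 - x) ^ p * -(1 - x)⁻¹) x := by
    refine ((((hasDerivAt_id x).const_sub 1).log hx₁).fun_pow (p + 1)).congr_deriv ?_
    simp only [id, Nat.add_sub_cancel]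
    push_cast
    ring
  refine (hpow.mul hlog).congr_deriv ?_
  rw [← Finset.sum_mul, ← geom_sum_mul, ← neg_sub 1 x]
  field_simp

theorem integral_pow_mul_log_one_sub_pow_succ (n p : ℕ) :
    ∫ x in (0:ℝ)..1, x ^ n * log (1 - x) ^ (p + 1)
      = -((p + 1) / (n + 1) * ∑ k ∈ range (n + 1), ∫ x in (0:ℝ)..1, x ^ k * log (1 - x) ^ p) := by
  set F : ℝ → ℝ := fun x => (x ^ (n + 1) - 1) / (n + 1) * log (1 - x) ^ (p + 1)
  have hF₀ : Tendsto F (𝓝[>] 0) (𝓝 0) := by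
    have : ContinuousAt F 0 := by fun_prop (disch := norm_num)
    simpa [F] using this.tendsto.mono_left nhdsWithin_le_nhds
  have hF₁ : Tendsto F (𝓝[<] 1) (𝓝 0) := by
    have hgeom : Tendsto (fun x : ℝ => -(∑ k ∈ range (n + 1), x ^ k) / (n + 1)) (𝓝[<] 1)
        (𝓝 (-(∑ k ∈ range (n + 1), (1:ℝ) ^ k) / (n + 1))) :=
      ((by fun_prop : Continuous fun x : ℝ => -(∑ k ∈ range (n + 1), x ^ k) / (n + 1)).tendsto
        1).mono_left nhdsWithin_le_nhds
    have := hgeom.mul (tendsto_one_sub_mul_log_one_sub_pow (p + 1))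
    rw [mul_zero] at this
    refine this.congr fun x => ?_
    simp only [F, ← geom_sum_mul]
    ring
  have hint (k q : ℕ) := intervalIntegrable_pow_mul_log_one_sub_pow k q
  have hint_sum : IntervalIntegrable
      (fun x => (p + 1) / (n + 1) * ∑ k ∈ range (n + 1), x ^ k * log (1 - x) ^ p) volume 0 1 := by
    simpa using (IntervalIntegrable.sum (range (n + 1)) fun k _ => hint k p).const_mul
      ((p + 1) / (n + 1))
  have hFTC := integral_eq_sub_of_hasDerivAt_of_tendsto zero_lt_one
    (fun x hx => hasDerivAt_pow_sub_one_div_mul_log_one_sub_pow n p hx.2.ne)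
    ((hint n (p + 1)).add hint_sum) hF₀ hF₁
  rw [integral_add (hint n (p + 1)) hint_sum, intervalIntegral.integral_const_mul,
    intervalIntegral.integral_finsetSum fun k _ => hint k p] at hFTC
  linarith

theorem integral_pow_mul_log_one_sub (n : ℕ) :
    ∫ x in (0:ℝ)..1, x ^ n * log (1 - x)
      = -(∑ k ∈ range (n + 1), 1 / ((k : ℝ) + 1)) / (n + 1) := by
  have h := integral_pow_mul_log_one_sub_pow_succ n 0
  simp only [zero_add, pow_one, pow_zero, mul_one, integral_pow, one_pow, ne_eq,
    Nat.add_one_ne_zero, not_false_eq_true, zero_pow, sub_zero, Nat.cast_zero] at h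
  rw [h]
  ring

theorem integral_pow_mul_log_one_sub_sq (n : ℕ) :
    ∫ x in (0:ℝ)..1, x ^ n * log (1 - x) ^ 2
      = 2 * (∑ k ∈ range (n + 1), 1 / ((k : ℝ) + 1) * ∑ i ∈ range (k + 1), 1 / ((i : ℝ) + 1))
        / (n + 1) := by
  rw [integral_pow_mul_log_one_sub_pow_succ n 1]
  simp only [pow_one, integral_pow_mul_log_one_sub]
  rw [mul_sum, mul_sum, ← sum_neg_distrib, sum_div]
  refine sum_congr rfl fun k _ => ?_
  push_cast
  ring

theorem sq_sum_add_sum_sq {R : Type*} [CommSemiring R] (f : ℕ → R) (n : ℕ) :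
    (∑ i ∈ range n, f i) ^ 2 + ∑ i ∈ range n, f i ^ 2
      = 2 * ∑ k ∈ range n, f k * ∑ i ∈ range (k + 1), f i := by
  induction n with
  | zero => simp
  | succ n ih =>
    rw [sum_range_succ, sum_range_succ, sum_range_succ (fun k => f k * _), mul_add, ← ih,
      sum_range_succ]
    ring

theorem sum_Icc_one_eq_sum_range {M : Type*} [AddCommMonoid M] (f : ℕ → M) (n : ℕ) :
    ∑ j ∈ Icc 1 n, f j = ∑ k ∈ range n, f (k + 1) := by
  rw [range_eq_Ico, sum_Ico_add' f, zero_add, Finset.Ico_add_one_right_eq_Icc]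

theorem stmt_2 (n : ℕ) (hn : 1 ≤ n) :
    ∫ x in (0:ℝ)..1, x ^ (n - 1) * (Real.log (1 - x)) ^ 2
      = ((∑ j ∈ Finset.Icc 1 n, (1 : ℝ) / j) ^ 2
          + ∑ j ∈ Finset.Icc 1 n, (1 : ℝ) / (j : ℝ) ^ 2) / n := by
  obtain ⟨m, rfl⟩ := Nat.exists_eq_add_of_le' hn
  rw [Nat.add_sub_cancel, integral_pow_mul_log_one_sub_sq, sum_Icc_one_eq_sum_range,
    sum_Icc_one_eq_sum_range, ← sq_sum_add_sum_sq]
  push_cast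
  simp only [div_pow, one_pow]
end

section
/- For all integers n ≥ 1 and m ≥ 1, ∑_{i=1}^m ζ*_n({1}_{i-1}, 2, {1}_{m-i}) = ∑_{i=1}^m ζ_n(m+2-i) · ζ*_n({1}_{i-1}), where ζ*_n denotes multiple harmonic star numbers and ζ_n(s) = ∑_{j=1}^n 1/j^s. -/
/-!
Index both sides by the antidiagonal `a + b = m` (the `2` sits after `a` ones and before `b` ones).
Splitting off the terms with largest index `n + 1` shows that both sides satisfy
`F (m+1) (n+1) = F (m+1) n + F m (n+1) / (n+1) + ζ*_{n+1}({1}_{m+1}) / (n+1)²`: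
on the left because the `2` is either in front or preceded by a `1`; on the right by the product
rule for differences in `n`, after which the extra terms telescope along the antidiagonal.
Both sides vanish at `n = 0` and equal `ζ_n(2)` at `m = 0`, so they agree.
-/

/-- Multiple harmonic star number (weakly decreasing indices). -/
noncomputable def mhStar : List ℝ → ℕ → ℝ
  | [], _ => 1
  | s :: t, n => ∑ k ∈ Finset.Icc 1 n, (1 / (k : ℝ) ^ s) * mhStar t k

open Finset

theorem eq_of_boundary_of_succ_succ {α : Type*} {F G : ℕ → ℕ → α} (step : ℕ → ℕ → α → α → α)
    (h_zero_left : ∀ n, F 0 n = G 0 n) (h_zero_right : ∀ m, F m 0 = G m 0)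
    (hF : ∀ m n, F (m + 1) (n + 1) = step m n (F (m + 1) n) (F m (n + 1)))
    (hG : ∀ m n, G (m + 1) (n + 1) = step m n (G (m + 1) n) (G m (n + 1))) :
    F = G := by
  funext m n
  induction m generalizing n with
  | zero => exact h_zero_left n
  | succ m ihm =>
    induction n with
    | zero => exact h_zero_right _
    | succ n ihn => rw [hF, hG, ihn, ihm]

theorem mhStar_cons_zero (s : ℝ) (t : List ℝ) : mhStar (s :: t) 0 = 0 := by
  simp [mhStar]

theorem mhStar_cons_succ (s : ℝ) (t : List ℝ) (n : ℕ) :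
    mhStar (s :: t) (n + 1) = mhStar (s :: t) n + 1 / ((n : ℝ) + 1) ^ s * mhStar t (n + 1) := by
  simp only [mhStar]
  rw [sum_Icc_succ_top (by omega), Nat.cast_add_one]

theorem mhStar_singleton_natCast (s n : ℕ) :
    mhStar [(s : ℝ)] n = ∑ j ∈ Icc 1 n, 1 / (j : ℝ) ^ s := by
  simp [mhStar]

noncomputable def truncZeta (s n : ℕ) : ℝ := ∑ j ∈ Icc 1 n, 1 / (j : ℝ) ^ s

theorem truncZeta_zero (s : ℕ) : truncZeta s 0 = 0 := by
  simp [truncZeta]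

theorem truncZeta_succ (s n : ℕ) :
    truncZeta s (n + 1) = truncZeta s n + 1 / ((n : ℝ) + 1) ^ s := by
  rw [truncZeta, sum_Icc_succ_top (by omega), Nat.cast_add_one, truncZeta]

noncomputable def mhStarOnes (a n : ℕ) : ℝ := mhStar (List.replicate a 1) n

theorem mhStarOnes_succ_succ (a n : ℕ) :
    mhStarOnes (a + 1) (n + 1)
      = mhStarOnes (a + 1) n + 1 / ((n : ℝ) + 1) * mhStarOnes a (n + 1) := by
  simp only [mhStarOnes, List.replicate_succ, mhStar_cons_succ, Real.rpow_one]

noncomputable def twoInsertionSum (m n : ℕ) : ℝ :=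
  ∑ p ∈ antidiagonal m, mhStar (List.replicate p.1 1 ++ 2 :: List.replicate p.2 1) n

noncomputable def zetaConvolution (m n : ℕ) : ℝ :=
  ∑ p ∈ antidiagonal m, truncZeta (p.2 + 2) n * mhStarOnes p.1 n

theorem twoInsertionSum_zero_right (m : ℕ) : twoInsertionSum m 0 = 0 := by
  refine sum_eq_zero fun p _ => ?_
  cases p.1 <;> simp [List.replicate_succ, mhStar_cons_zero]

theorem zetaConvolution_zero_right (m : ℕ) : zetaConvolution m 0 = 0 := by
  simp [zetaConvolution, truncZeta_zero]

theorem twoInsertionSum_zero_left (n : ℕ) : twoInsertionSum 0 n = truncZeta 2 n := by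
  simpa [twoInsertionSum, truncZeta] using mhStar_singleton_natCast 2 n

theorem zetaConvolution_zero_left (n : ℕ) : zetaConvolution 0 n = truncZeta 2 n := by
  simp [zetaConvolution, mhStarOnes, mhStar]

theorem twoInsertionSum_succ_succ (m n : ℕ) :
    twoInsertionSum (m + 1) (n + 1) = twoInsertionSum (m + 1) n
      + 1 / ((n : ℝ) + 1) * twoInsertionSum m (n + 1)
      + 1 / ((n : ℝ) + 1) ^ 2 * mhStarOnes (m + 1) (n + 1) := by
  simp only [twoInsertionSum, Nat.sum_antidiagonal_succ, List.replicate_zero, List.nil_append,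
    List.replicate_succ, List.cons_append, mhStar_cons_succ, Real.rpow_one, Real.rpow_two,
    sum_add_distrib, ← mul_sum, mhStarOnes]
  ring

theorem zetaConvolution_succ_succ (m n : ℕ) :
    zetaConvolution (m + 1) (n + 1) = zetaConvolution (m + 1) n
      + 1 / ((n : ℝ) + 1) * zetaConvolution m (n + 1)
      + 1 / ((n : ℝ) + 1) ^ 2 * mhStarOnes (m + 1) (n + 1) := by
  have new_terms :
      ∑ p ∈ antidiagonal (m + 1), 1 / ((n : ℝ) + 1) ^ (p.2 + 2) * mhStarOnes p.1 (n + 1)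
      = 1 / ((n : ℝ) + 1) ^ 2 * mhStarOnes (m + 1) (n + 1) + 1 / ((n : ℝ) + 1) *
          ∑ p ∈ antidiagonal m, 1 / ((n : ℝ) + 1) ^ (p.2 + 2) * mhStarOnes p.1 (n + 1) := by
    rw [Nat.sum_antidiagonal_succ', mul_sum]
    congr 1
    refine sum_congr rfl fun p _ => ?_
    field_simp
    ring
  have old_terms : ∑ p ∈ antidiagonal (m + 1), truncZeta (p.2 + 2) n * mhStarOnes p.1 (n + 1)
      = ∑ p ∈ antidiagonal (m + 1), truncZeta (p.2 + 2) n * mhStarOnes p.1 n + 1 / ((n : ℝ) + 1) *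
          ∑ p ∈ antidiagonal m, truncZeta (p.2 + 2) n * mhStarOnes p.1 (n + 1) := by
    rw [Nat.sum_antidiagonal_succ, Nat.sum_antidiagonal_succ, mul_sum,
      add_assoc (truncZeta _ n * _), ← sum_add_distrib]
    congr 1
    refine sum_congr rfl fun p _ => ?_
    rw [mhStarOnes_succ_succ]
    ring
  simp only [zetaConvolution, truncZeta_succ, add_mul, sum_add_distrib]
  rw [new_terms, old_terms]
  ring

theorem twoInsertionSum_eq_zetaConvolution : twoInsertionSum = zetaConvolution :=
  eq_of_boundary_of_succ_succ
    (fun m n A B => A + 1 / ((n : ℝ) + 1) * B + 1 / ((n : ℝ) + 1) ^ 2 * mhStarOnes (m + 1) (n + 1))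
    (fun n => by rw [twoInsertionSum_zero_left, zetaConvolution_zero_left])
    (fun m => by rw [twoInsertionSum_zero_right, zetaConvolution_zero_right])
    twoInsertionSum_succ_succ zetaConvolution_succ_succ

theorem sum_Icc_one_eq_sum_antidiagonal {M : Type*} [AddCommMonoid M] (f : ℕ → ℕ → M) (m : ℕ) :
    ∑ i ∈ Icc 1 (m + 1), f (i - 1) (m + 1 - i) = ∑ p ∈ antidiagonal m, f p.1 p.2 := by
  rw [Nat.sum_antidiagonal_eq_sum_range_succ, ← Ico_add_one_right_eq_Icc, sum_Ico_eq_sum_range]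
  refine sum_congr (by simp) fun k _ => ?_
  congr 1 <;> omega

theorem stmt_15_general (n m : ℕ) (hm : 1 ≤ m) :
    ∑ i ∈ Finset.Icc 1 m,
        mhStar (List.replicate (i - 1) 1 ++ 2 :: List.replicate (m - i) 1) n
      = ∑ i ∈ Finset.Icc 1 m,
          (∑ j ∈ Finset.Icc 1 n, (1 : ℝ) / (j : ℝ) ^ (m + 2 - i))
            * mhStar (List.replicate (i - 1) 1) n := by
  obtain ⟨m, rfl⟩ := Nat.exists_eq_add_of_le' hm
  have key := congrFun (congrFun twoInsertionSum_eq_zetaConvolution m) n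
  rw [twoInsertionSum, zetaConvolution] at key
  convert key using 1
  · exact sum_Icc_one_eq_sum_antidiagonal
      (fun a b => mhStar (List.replicate a 1 ++ 2 :: List.replicate b 1) n) m
  · rw [← sum_Icc_one_eq_sum_antidiagonal (fun a b => truncZeta (b + 2) n * mhStarOnes a n)]
    refine sum_congr rfl fun i hi => ?_
    rw [show m + 1 + 2 - i = m + 1 - i + 2 by have := (mem_Icc.1 hi).2; omega]
    rfl

theorem stmt_15 (n m : ℕ) (hn : 1 ≤ n) (hm : 1 ≤ m) :
    ∑ i ∈ Finset.Icc 1 m,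
        mhStar (List.replicate (i - 1) 1 ++ 2 :: List.replicate (m - i) 1) n
      = ∑ i ∈ Finset.Icc 1 m,
          (∑ j ∈ Finset.Icc 1 n, (1 : ℝ) / (j : ℝ) ^ (m + 2 - i))
            * mhStar (List.replicate (i - 1) 1) n :=
  stmt_15_general n m hm
end
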